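/- The number of nonnegative integers not belonging to H is exactly t = ((n−2)·α − Σ_{i=1}^{n−1} α/a_i + 1)/2. -/

import Mathlib

/-!
Write `N = ∏ aᵢ` and `Gᵢ = N / aᵢ`. Since `aᵢ ∣ Gⱼ` for `j ≠ i` and `gcd(aᵢ, Gᵢ) = 1`, the numbers
`K(c) = ∑ cᵢ Gᵢ` with `0 ≤ cᵢ < aᵢ` are pairwise incongruent modulo `N`, so they represent each
residue class exactly once. Reducing the coefficients of an element of `H` modulo `aᵢ` (and using
`N = aᵢ Gᵢ ∈ H`) shows that `K(c)` is the least element of `H` in its class: the `K(c)` form the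
Apéry set of `H` with respect to `N`. Hence the gaps in the class of `K(c)` are
`K(c) - N, K(c) - 2N, …`, which are `⌊K(c) / N⌋` numbers, and
`N · #gaps = ∑ K(c) - ∑ (K(c) mod N)`. The second sum is `0 + 1 + ⋯ + (N - 1)`; the first is
computed by pairing `c` with its reflection `cᵢ ↦ aᵢ - 1 - cᵢ`, which turns `K(c) + K(c')` into
`∑ (aᵢ - 1) Gᵢ = (n - 1) N - ∑ Gᵢ`.
-/

open Finset Function

namespace CofactorSemigroup

variable {ι : Type*} [Fintype ι] [DecidableEq ι] (a : ι → ℕ)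

def cofactor (i : ι) : ℕ := ∏ j ∈ univ.erase i, a j

def semigroup : AddSubmonoid ℕ := AddSubmonoid.closure (Set.range (cofactor a))

def gaps : Set ℕ := {s | s ∉ semigroup a}

def apery (c : ∀ i, Fin (a i)) : ℕ := ∑ i, (c i : ℕ) * cofactor a i

variable {a}

theorem mul_cofactor (i : ι) : a i * cofactor a i = ∏ j, a j :=
  mul_prod_erase univ a (mem_univ i)

theorem dvd_cofactor {i j : ι} (h : i ≠ j) : a i ∣ cofactor a j :=
  dvd_prod_of_mem a (mem_erase.2 ⟨h, mem_univ i⟩)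

theorem coprime_cofactor (hcop : Pairwise (Nat.Coprime on a)) (i : ι) :
    Nat.Coprime (a i) (cofactor a i) :=
  Nat.Coprime.prod_right fun _ hj => hcop (mem_erase.1 hj).1.symm

theorem apery_modEq_mul_cofactor (c : ∀ i, Fin (a i)) (i : ι) :
    apery a c ≡ c i * cofactor a i [MOD a i] := by
  rw [apery, ← add_sum_erase _ _ (mem_univ i)]
  refine ((Nat.modEq_iff_dvd' (Nat.le_add_right _ _)).2 ?_).symm
  rw [Nat.add_sub_cancel_left]
  exact dvd_sum fun j hj => (dvd_cofactor (mem_erase.1 hj).1.symm).mul_left _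

theorem eq_of_apery_modEq (hcop : Pairwise (Nat.Coprime on a)) {c c' : ∀ i, Fin (a i)}
    (h : apery a c ≡ apery a c' [MOD ∏ j, a j]) : c = c' := by
  funext i
  have hi : c i * cofactor a i ≡ c' i * cofactor a i [MOD a i] :=
    (apery_modEq_mul_cofactor c i).symm.trans ((h.of_dvd (dvd_prod_of_mem a (mem_univ i))).trans
      (apery_modEq_mul_cofactor c' i))
  exact Fin.ext ((Nat.ModEq.cancel_right_of_coprime (coprime_cofactor hcop i) hi).eq_of_lt_of_lt
    (c i).2 (c' i).2)

section

variable [NeZero (∏ j, a j)]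

theorem apery_bijective (hcop : Pairwise (Nat.Coprime on a)) :
    Bijective fun c => Fin.ofNat (∏ j, a j) (apery a c) := by
  refine (Fintype.bijective_iff_injective_and_card _).2 ⟨fun c c' h => ?_, by simp⟩
  exact eq_of_apery_modEq hcop (Fin.val_eq_of_eq h)

theorem exists_apery_modEq (hcop : Pairwise (Nat.Coprime on a)) (s : ℕ) :
    ∃ c, apery a c ≡ s [MOD ∏ j, a j] := by
  obtain ⟨c, hc⟩ := (apery_bijective hcop).2 (Fin.ofNat _ s)
  exact ⟨c, Fin.val_eq_of_eq hc⟩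

theorem sum_apery_mod (hcop : Pairwise (Nat.Coprime on a)) :
    ∑ c, apery a c % ∏ j, a j = ∑ r ∈ range (∏ j, a j), r := by
  rw [← Fin.sum_univ_eq_sum_range]
  exact (Equiv.ofBijective _ (apery_bijective hcop)).sum_comp (fun r => (r : ℕ))

end

theorem apery_mem (c : ∀ i, Fin (a i)) : apery a c ∈ semigroup a :=
  sum_mem fun i _ => nsmul_mem (AddSubmonoid.subset_closure (Set.mem_range_self i)) (c i : ℕ)

theorem prod_mem_semigroup [Nonempty ι] : ∏ j, a j ∈ semigroup a := by
  obtain ⟨i⟩ := ‹Nonempty ι›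
  rw [← mul_cofactor i]
  exact nsmul_mem (AddSubmonoid.subset_closure (Set.mem_range_self i)) (a i)

theorem mem_of_apery_le [Nonempty ι] {c : ∀ i, Fin (a i)} {s : ℕ} (hle : apery a c ≤ s)
    (hmod : apery a c ≡ s [MOD ∏ j, a j]) : s ∈ semigroup a := by
  obtain ⟨l, hl⟩ := (Nat.modEq_iff_dvd' hle).1 hmod
  rw [← Nat.add_sub_cancel' hle, hl, mul_comm]
  exact add_mem (apery_mem c) (nsmul_mem prod_mem_semigroup l)

theorem exists_apery_le_of_mem (ha : ∀ i, 0 < a i) {s : ℕ} (hs : s ∈ semigroup a) :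
    ∃ c, apery a c ≤ s ∧ apery a c ≡ s [MOD ∏ j, a j] := by
  obtain ⟨d, rfl⟩ := AddSubmonoid.mem_closure_range_iff_of_fintype.1 hs
  let c : ∀ i, Fin (a i) := fun i => ⟨d i % a i, Nat.mod_lt _ (ha i)⟩
  have hd : ∑ i, d i • cofactor a i = apery a c + (∑ i, d i / a i) * ∏ j, a j := by
    rw [apery, sum_mul, ← sum_add_distrib]
    refine sum_congr rfl fun i _ => ?_
    rw [smul_eq_mul, ← mul_cofactor i]
    conv_lhs => rw [← Nat.mod_add_div (d i) (a i)]
    ring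
  rw [hd]
  exact ⟨c, Nat.le_add_right _ _, (Nat.add_mul_mod_self_right _ _ _).symm⟩

theorem mem_gaps_iff [Nonempty ι] (ha : ∀ i, 0 < a i) (hcop : Pairwise (Nat.Coprime on a))
    (s : ℕ) : s ∈ gaps a ↔ ∃ c, s < apery a c ∧ s ≡ apery a c [MOD ∏ j, a j] := by
  constructor
  · intro hs
    have : NeZero (∏ j, a j) := ⟨(prod_pos fun i _ => ha i).ne'⟩
    obtain ⟨c, hc⟩ := exists_apery_modEq hcop s
    exact ⟨c, lt_of_not_ge fun hle => hs (mem_of_apery_le hle hc), hc.symm⟩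
  · rintro ⟨c, hlt, hc⟩ hs
    obtain ⟨c', hle, hc'⟩ := exists_apery_le_of_mem ha hs
    obtain rfl := eq_of_apery_modEq hcop (hc'.trans hc)
    omega

theorem ncard_gaps [Nonempty ι] (ha : ∀ i, 0 < a i) (hcop : Pairwise (Nat.Coprime on a)) :
    (gaps a).ncard = ∑ c, apery a c / ∏ j, a j := by
  have hgaps : gaps a = ↑(univ.biUnion fun c =>
      {s ∈ range (apery a c) | s ≡ apery a c [MOD ∏ j, a j]}) := by
    ext s
    simp [mem_gaps_iff ha hcop]
  rw [hgaps, Set.ncard_coe_finset, card_biUnion]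
  · refine sum_congr rfl fun c _ => ?_
    rw [← Nat.count_eq_card_filter_range, Nat.count_modEq_card _ (prod_pos fun i _ => ha i)]
    simp
  · intro c _ c' _ hne
    refine disjoint_left.2 fun s hs hs' => hne ?_
    simp only [mem_filter] at hs hs'
    exact eq_of_apery_modEq hcop (hs.2.symm.trans hs'.2)

theorem two_mul_sum_apery :
    2 * ∑ c, apery a c + (∏ j, a j) * ∑ i, cofactor a i
      = (∏ j, a j) * (Fintype.card ι * ∏ j, a j) := by
  have hrev (c : ∀ i, Fin (a i)) :
      apery a c + apery a (fun i => (c i).rev) + ∑ i, cofactor a i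
        = Fintype.card ι * ∏ j, a j := by
    rw [apery, apery, ← sum_add_distrib, ← sum_add_distrib, ← smul_eq_mul, ← card_univ,
      ← sum_const]
    refine sum_congr rfl fun i _ => ?_
    rw [Fin.val_rev, ← mul_cofactor i]
    have := (c i).2
    calc _ = ((c i : ℕ) + (a i - (c i + 1)) + 1) * cofactor a i := by ring
      _ = _ := by congr 1; omega
  let rev : (∀ i, Fin (a i)) ≃ ∀ i, Fin (a i) := Equiv.piCongrRight fun _ => Fin.revPerm
  calc _ = ∑ c, (apery a c + apery a (rev c) + ∑ i, cofactor a i) := by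
        rw [sum_add_distrib, sum_add_distrib, rev.sum_comp (apery a), sum_const, card_univ,
          Fintype.card_pi]
        simp only [Fintype.card_fin, smul_eq_mul]
        ring
    _ = ∑ _c : ∀ i, Fin (a i), Fintype.card ι * ∏ j, a j := Fintype.sum_congr _ _ hrev
    _ = _ := by simp [Fintype.card_pi]

theorem two_mul_ncard_gaps_add [Nonempty ι] (ha : ∀ i, 0 < a i)
    (hcop : Pairwise (Nat.Coprime on a)) :
    2 * (gaps a).ncard + ∏ j, a j + ∑ i, cofactor a i
      = Fintype.card ι * ∏ j, a j + 1 := by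
  have hN : 0 < ∏ j, a j := prod_pos fun i _ => ha i
  have : NeZero (∏ j, a j) := ⟨hN.ne'⟩
  have hsum := two_mul_sum_apery (a := a)
  rw [ncard_gaps ha hcop]
  set N := ∏ j, a j
  have hdiv : N * ∑ c, apery a c / N + ∑ c, apery a c % N = ∑ c, apery a c := by
    rw [mul_sum, ← sum_add_distrib]
    exact sum_congr rfl fun c _ => Nat.div_add_mod _ _
  have hmod : 2 * ∑ c, apery a c % N + N = N * N := by
    rw [sum_apery_mod hcop, mul_comm, sum_range_id_mul_two, Nat.mul_sub_one,
      Nat.sub_add_cancel (Nat.le_mul_self N)]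
  refine Nat.eq_of_mul_eq_mul_left hN ?_
  linarith

end CofactorSemigroup

open CofactorSemigroup

/-- The number of nonnegative integers not belonging to the numerical semigroup H generated by the α/a_i is exactly t = ((n−2)·α − Σ α/a_i + 1)/2. -/
theorem stmt_11 (n : ℕ) (hn : 3 ≤ n) (a : Fin (n - 1) → ℤ)
    (ha : ∀ i, 2 ≤ a i)
    (hcop : ∀ i j, i ≠ j → IsCoprime (a i) (a j))
    (α : ℤ) (hα : α = ∏ i, a i)
    (t : ℤ) (ht : 2 * t = ((n : ℤ) - 2) * α - (∑ i, α / a i) + 1) :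
    (({s : ℕ | ¬ ∃ c : Fin (n - 1) → ℕ, (s : ℤ) = ∑ i, (c i : ℤ) * (α / a i)}.ncard : ℤ)) = t := by
  lift a to Fin (n - 1) → ℕ using fun i => by linarith [ha i]
  dsimp only at ha hcop hα ht
  subst hα
  have : Nonempty (Fin (n - 1)) := ⟨⟨0, by omega⟩⟩
  have hcofactor (i : Fin (n - 1)) : (∏ j, (a j : ℤ)) / a i = cofactor a i := by
    rw [← Nat.cast_prod, ← mul_cofactor i, Nat.cast_mul,
      Int.mul_ediv_cancel_left _ (by linarith [ha i])]
  have hgaps : {s : ℕ | ¬ ∃ c : Fin (n - 1) → ℕ,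
      (s : ℤ) = ∑ i, (c i : ℤ) * ((∏ j, (a j : ℤ)) / a i)} = gaps a := by
    ext s
    simp only [hcofactor, gaps, semigroup, AddSubmonoid.mem_closure_range_iff_of_fintype,
      smul_eq_mul, Set.mem_ofPred_eq]
    norm_cast
  have key := two_mul_ncard_gaps_add (fun i => by linarith [ha i])
    fun i j hij => Nat.isCoprime_iff_coprime.1 (hcop i j hij)
  rw [Fintype.card_fin] at key
  rw [hgaps]
  simp only [hcofactor] at ht
  zify [show 1 ≤ n by omega] at key
  linarith
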